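/- For all n ≥ 1, P_{n+1}(x) = Σ_{k=0}^{n} C(n,k)·P_k(x)·P_{n-k}(x). -/

import Mathlib

open Polynomial Finset

noncomputable def tanDerivPoly : ℕ → Polynomial ℝ
  | 0 => X
  | n + 1 => (1 + X ^ 2) * derivative (tanDerivPoly n)

/-!
`P_n = Dⁿ x` for the derivation `D = (1 + x²) d/dx` of `ℝ[X]`. Hence for `n ≥ 1`,
`P_{n+1} = Dⁿ (1 + x · x) = Dⁿ (x · x)`, and the general Leibniz rule expands `Dⁿ (x · x)`
into the binomial convolution of the `P_k`.
-/

namespace Derivation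

variable {R A : Type*} [CommSemiring R] [CommSemiring A] [Algebra R A]

theorem iterate_map_mul (D : Derivation R A A) (n : ℕ) (a b : A) :
    D^[n] (a * b) = ∑ ij ∈ antidiagonal n, n.choose ij.1 • (D^[ij.1] a * D^[ij.2] b) := by
  induction n with
  | zero => simp
  | succ n ih =>
    rw [sum_antidiagonal_choose_succ_nsmul (fun i j ↦ D^[i] a * D^[j] b) n]
    simp only [Function.iterate_succ_apply', ih, map_sum, map_nsmul, leibniz, smul_eq_mul,
      smul_add, sum_add_distrib]
    congr 1
    refine sum_congr rfl fun ⟨i, j⟩ hij ↦ ?_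
    rw [n.choose_symm_of_eq_add (mem_antidiagonal.1 hij).symm, mul_comm]

theorem iterate_map_one (D : Derivation R A A) {n : ℕ} (hn : n ≠ 0) : D^[n] (1 : A) = 0 := by
  obtain ⟨m, rfl⟩ := Nat.exists_eq_succ_of_ne_zero hn
  rw [Function.iterate_succ_apply, D.map_one_eq_zero, iterate_map_zero]

end Derivation

noncomputable def tanDerivation : Derivation ℝ ℝ[X] ℝ[X] :=
  (1 + X ^ 2 : ℝ[X]) • derivative'

theorem tanDerivPoly_eq_iterate (n : ℕ) : tanDerivPoly n = tanDerivation^[n] (X : ℝ[X]) := by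
  induction n with
  | zero => rfl
  | succ n ih =>
    rw [Function.iterate_succ_apply', ← ih, tanDerivPoly, tanDerivation, Derivation.smul_apply,
      derivative'_apply, smul_eq_mul]

theorem tanDerivPoly_convolution (n : ℕ) (hn : 1 ≤ n) :
    tanDerivPoly (n + 1) =
      ∑ k ∈ Finset.range (n + 1),
        (n.choose k : Polynomial ℝ) * tanDerivPoly k * tanDerivPoly (n - k) := by
  have hD : tanDerivation X = 1 + X * X := by
    simp [tanDerivation, sq]
  rw [tanDerivPoly_eq_iterate, Function.iterate_succ_apply, hD, iterate_map_add,
    tanDerivation.iterate_map_one (by omega), zero_add, tanDerivation.iterate_map_mul,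
    Nat.sum_antidiagonal_eq_sum_range_succ
      (fun i j ↦ n.choose i • (tanDerivation^[i] X * tanDerivation^[j] X))]
  simp_rw [← tanDerivPoly_eq_iterate, nsmul_eq_mul, mul_assoc]
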